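/- arXiv:1804.05752 — 3 statements merged into one kernel-verified Lean document; each statement's English description precedes it below -/
import Mathlib

section
/- For every μ ∈ Δ(X) and every exposed point v of 𝒱(μ) (i.e., there exists a linear functional l on ℝ^n with l(v) > l(v') for all v' ∈ 𝒱(μ) with v' ≠ v), there exists P ∈ Δ²(X) with barycenter E_P[ν] = μ and support of size at most |X| such that v = (E_P[V^1], …, E_P[V^n]). -/
open MeasureTheory Topology Filter

noncomputable section

/-- Expected value `E_P[W] = ∫ W(ν) dP(ν)` of a function `W : Δ(X) → ℝ`
under a Borel probability measure `P ∈ Δ²(X)` on the simplex `Δ(X)`. -/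
def expct {X : Type*} [Fintype X] (P : ProbabilityMeasure (stdSimplex ℝ X))
    (W : stdSimplex ℝ X → ℝ) : ℝ :=
  ∫ ν, W ν ∂(P : Measure (stdSimplex ℝ X))

/-- `P ∈ Δ²(X)` has barycenter `E_P[ν] = μ`. -/
def isBary {X : Type*} [Fintype X] (P : ProbabilityMeasure (stdSimplex ℝ X))
    (μ : stdSimplex ℝ X) : Prop :=
  ∀ x : X, expct P (fun ν => (ν : X → ℝ) x) = (μ : X → ℝ) x

/-- `P ∈ Δ²(X)` has support of size at most `m`: it is a convex combination of at
most `m` Dirac measures on `Δ(X)`. -/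
def finSupp {X : Type*} [Fintype X] (P : ProbabilityMeasure (stdSimplex ℝ X)) (m : ℕ) : Prop :=
  ∃ (p : Fin m → ℝ) (ν : Fin m → stdSimplex ℝ X),
    (∀ j, 0 ≤ p j) ∧ (∑ j, p j = 1) ∧
    (P : Measure (stdSimplex ℝ X)) = ∑ j, ENNReal.ofReal (p j) • Measure.dirac (ν j)

/-- The information possibility set
`𝒱(μ) = {(E_P[V^1], …, E_P[V^n]) : P ∈ Δ²(X), E_P[ν] = μ} ⊆ ℝ^n`. -/
def VSet {X : Type*} [Fintype X] {n : ℕ} (V : Fin n → stdSimplex ℝ X → ℝ)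
    (μ : stdSimplex ℝ X) : Set (Fin n → ℝ) :=
  {v | ∃ P : ProbabilityMeasure (stdSimplex ℝ X), isBary P μ ∧ ∀ i, expct P (V i) = v i}

universe u

open Finset in
private lemma aux_pad {ι : Type*} {Z : Type*} (t : Finset ι) (ζ : ι → Z) (w : ι → ℝ)
    (z0 : Z) (N : ℕ) (hN : t.card ≤ N) :
    ∃ (q : Fin N → ℝ) (ω : Fin N → Z),
      (∀ i, q i = 0 ∨ ∃ j ∈ t, q i = w j) ∧
      (∀ i, ω i = z0 ∨ ∃ j ∈ t, ω i = ζ j) ∧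
      (∀ {M : Type u} [AddCommMonoid M] [Module ℝ M] (g : Z → M),
        ∑ i, q i • g (ω i) = ∑ j ∈ t, w j • g (ζ j)) := by
  classical
  set k := t.card with hk
  let e : Fin k ≃ {x // x ∈ t} := t.equivFin.symm
  refine ⟨fun i => if h : (i : ℕ) < k then w ((e ⟨i, h⟩ : {x // x ∈ t}) : ι) else 0,
          fun i => if h : (i : ℕ) < k then ζ ((e ⟨i, h⟩ : {x // x ∈ t}) : ι) else z0,
          ?_, ?_, ?_⟩
  · intro i
    by_cases h : (i : ℕ) < k
    · exact Or.inr ⟨(e ⟨i, h⟩ : {x // x ∈ t}), (e ⟨i, h⟩).2, by simp [h]⟩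
    · exact Or.inl (by simp [h])
  · intro i
    by_cases h : (i : ℕ) < k
    · exact Or.inr ⟨(e ⟨i, h⟩ : {x // x ∈ t}), (e ⟨i, h⟩).2, by simp [h]⟩
    · exact Or.inl (by simp [h])
  · intro M _ _ g
    set F : ℕ → M := fun m =>
      if h : m < k then w ((e ⟨m, h⟩ : {x // x ∈ t}) : ι) • g (ζ ((e ⟨m, h⟩ : {x // x ∈ t}) : ι))
      else (0 : M) with hF
    have h1 : ∑ i : Fin N,
        (if h : (i : ℕ) < k then w ((e ⟨i, h⟩ : {x // x ∈ t}) : ι) else 0) •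
          g (if h : (i : ℕ) < k then ζ ((e ⟨i, h⟩ : {x // x ∈ t}) : ι) else z0)
        = ∑ i : Fin N, F (i : ℕ) := by
      refine Finset.sum_congr rfl fun i _ => ?_
      by_cases h : (i : ℕ) < k
      · simp [hF, h]
      · simp [hF, h]
    rw [h1, Fin.sum_univ_eq_sum_range F N]
    rw [← Finset.sum_subset (Finset.range_subset_range.mpr hN)
        (fun m _ hm => dif_neg (fun hc => hm (Finset.mem_range.mpr hc)))]
    rw [← Fin.sum_univ_eq_sum_range F k]
    have h2 : ∑ i : Fin k, F (i : ℕ)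
        = ∑ i : Fin k, w ((e i : {x // x ∈ t}) : ι) • g (ζ ((e i : {x // x ∈ t}) : ι)) := by
      refine Finset.sum_congr rfl fun i _ => ?_
      simp [hF, i.2]
    rw [h2, Equiv.sum_comp e (fun j : {x // x ∈ t} => w (j : ι) • g (ζ (j : ι)))]
    simp [Finset.univ_eq_attach, Finset.sum_attach t (fun j => w j • g (ζ j))]

open Finset Set in
private lemma isCompact_convexHull_of_isCompact {E : Type u} [NormedAddCommGroup E] [NormedSpace ℝ E]
    [FiniteDimensional ℝ E] {s : Set E} (hs : IsCompact s) :
    IsCompact (convexHull ℝ s) := by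
  rcases s.eq_empty_or_nonempty with rfl | ⟨a0, ha0⟩
  · simp only [convexHull_empty]; exact isCompact_empty
  set D := Module.finrank ℝ E + 1 with hD
  set Φ : (Fin D → ℝ) × (Fin D → E) → E := fun p => ∑ i, p.1 i • p.2 i with hΦ
  have hΦcont : Continuous Φ :=
    continuous_finset_sum _ fun i _ =>
      ((continuous_apply i).comp continuous_fst).smul ((continuous_apply i).comp continuous_snd)
  have hK : IsCompact ((stdSimplex ℝ (Fin D)) ×ˢ (Set.univ.pi fun _ : Fin D => s)) :=
    IsCompact.prod (isCompact_stdSimplex ..) (isCompact_univ_pi fun _ => hs)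
  have himg : Φ '' ((stdSimplex ℝ (Fin D)) ×ˢ (Set.univ.pi fun _ : Fin D => s))
      = convexHull ℝ s := by
    apply Set.Subset.antisymm
    · rintro x ⟨⟨wv, gv⟩, ⟨hw, hg⟩, rfl⟩
      exact mem_convexHull_of_exists_fintype wv gv (fun i => hw.1 i) hw.2
        (fun i => hg i (Set.mem_univ i)) rfl
    · intro x hx
      obtain ⟨ι, hft, z, wgt, hrange, haff, hpos, hsum, hrep⟩ :=
        eq_pos_convex_span_of_mem_convexHull hx
      have hcard : Fintype.card ι ≤ D :=
        le_trans haff.card_le_finrank_succ (by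
          have := Submodule.finrank_le (vectorSpan ℝ (Set.range z))
          omega)
      obtain ⟨q, ω, hq, hω, hsumg⟩ :=
        aux_pad (Finset.univ : Finset ι) z wgt a0 D (by simpa using hcard)
      have key := hsumg (M := E × ℝ) (fun y => (y, (1 : ℝ)))
      have key1 : ∑ i, q i • ω i = x := by
        have := congrArg Prod.fst key
        simpa [Prod.fst_sum, hrep] using this
      have key2 : ∑ i, q i = 1 := by
        have := congrArg Prod.snd key
        simpa [Prod.snd_sum, smul_eq_mul, hsum] using this
      refine ⟨(q, ω), ⟨⟨fun i => show 0 ≤ q i from ?_, key2⟩,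
        fun i _ => show ω i ∈ s from ?_⟩, key1⟩
      · rcases hq i with h | ⟨j, _, h⟩
        · exact h.ge
        · exact h ▸ (hpos j).le
      · rcases hω i with h | ⟨j, _, h⟩
        · exact h ▸ ha0
        · exact h ▸ hrange (Set.mem_range_self j)
  rw [← himg]
  exact hK.image hΦcont

open Finset in
private lemma reduce {X : Type*} [Fintype X] (W : stdSimplex ℝ X → ℝ) :
    ∀ (k : ℕ) {ι : Type*} (t : Finset ι) (w : ι → ℝ) (ζ : ι → stdSimplex ℝ X),
      t.card ≤ k → (∀ j ∈ t, 0 ≤ w j) →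
      ∃ t' : Finset ι, t' ⊆ t ∧ t'.card ≤ Fintype.card X ∧
        ∃ w' : ι → ℝ, (∀ j ∈ t', 0 ≤ w' j) ∧
          (∀ x : X, ∑ j ∈ t', w' j * (ζ j : X → ℝ) x = ∑ j ∈ t, w j * (ζ j : X → ℝ) x) ∧
          ∑ j ∈ t, w j * W (ζ j) ≤ ∑ j ∈ t', w' j * W (ζ j) := by
  intro k
  induction k with
  | zero =>
    intro ι t w ζ hcard hw
    exact ⟨t, Finset.Subset.refl t, le_trans hcard (Nat.zero_le _), w, hw,
      fun x => rfl, le_rfl⟩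
  | succ k ih =>
    intro ι t w ζ hcard hw
    classical
    by_cases hle : t.card ≤ Fintype.card X
    · exact ⟨t, Finset.Subset.refl t, hle, w, hw, fun x => rfl, le_rfl⟩
    push_neg at hle
    by_cases hzero : ∃ j ∈ t, w j = 0
    · obtain ⟨j, hjt, hj0⟩ := hzero
      obtain ⟨t', ht'sub, ht'card, w', hw', hbal, hobj⟩ :=
        ih (t.erase j) w ζ
          (by have := Finset.card_erase_of_mem hjt; omega)
          (fun i hi => hw i (Finset.mem_of_mem_erase hi))
      refine ⟨t', ht'sub.trans (Finset.erase_subset j t), ht'card, w', hw', ?_, ?_⟩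
      · intro x
        rw [hbal x, Finset.sum_erase _ (by simp [hj0])]
      · calc ∑ j' ∈ t, w j' * W (ζ j')
              = ∑ j' ∈ t.erase j, w j' * W (ζ j') :=
                (Finset.sum_erase _ (by simp [hj0])).symm
          _ ≤ _ := hobj
    push_neg at hzero
    have hwpos : ∀ j ∈ t, 0 < w j := fun j hj => lt_of_le_of_ne (hw j hj) (Ne.symm (hzero j hj))
    -- linear dependence among the ζ j, j ∈ t
    have hnli : ¬ LinearIndependent ℝ (fun j : {x // x ∈ t} => ((ζ (j : ι) : X → ℝ))) := by
      intro hli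
      have h1 := hli.fintype_card_le_finrank
      rw [Module.finrank_pi, Fintype.card_coe] at h1
      omega
    obtain ⟨g, hg0, i0, hi0⟩ := Fintype.not_linearIndependent_iff.mp hnli
    set d : ι → ℝ := fun j => if h : j ∈ t then g ⟨j, h⟩ else 0 with hddef
    have hdsum : ∑ j ∈ t, d j • ((ζ j : X → ℝ)) = 0 := by
      rw [← Finset.sum_attach t (fun j => d j • ((ζ j : X → ℝ)))]
      rw [← hg0, Finset.univ_eq_attach]
      refine Finset.sum_congr rfl fun j _ => ?_
      simp [hddef, j.2]
    have hdx : ∀ x : X, ∑ j ∈ t, d j * (ζ j : X → ℝ) x = 0 := by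
      intro x
      have := congrFun hdsum x
      simpa [Finset.sum_apply] using this
    have hd1 : ∑ j ∈ t, d j = 0 := by
      have hstep : ∀ j ∈ t, d j = ∑ x : X, d j * (ζ j : X → ℝ) x := by
        intro j _
        rw [← Finset.mul_sum, show ∑ x : X, (ζ j : X → ℝ) x = 1 from (ζ j).2.2, mul_one]
      calc ∑ j ∈ t, d j = ∑ j ∈ t, ∑ x : X, d j * (ζ j : X → ℝ) x :=
            Finset.sum_congr rfl hstep
        _ = ∑ x : X, ∑ j ∈ t, d j * (ζ j : X → ℝ) x := Finset.sum_comm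
        _ = 0 := by simp [hdx]
    have hdne : ∃ j ∈ t, d j ≠ 0 := ⟨(i0 : ι), i0.2, by simpa [hddef, i0.2] using hi0⟩
    obtain ⟨e, hex, he1, hene, heobj⟩ :
        ∃ e : ι → ℝ, (∀ x : X, ∑ j ∈ t, e j * (ζ j : X → ℝ) x = 0) ∧
          (∑ j ∈ t, e j = 0) ∧ (∃ j ∈ t, e j ≠ 0) ∧
          0 ≤ ∑ j ∈ t, e j * W (ζ j) := by
      rcases le_or_gt 0 (∑ j ∈ t, d j * W (ζ j)) with hc | hc
      · exact ⟨d, hdx, hd1, hdne, hc⟩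
      · obtain ⟨j, hj, hne⟩ := hdne
        refine ⟨-d, ?_, ?_, ⟨j, hj, by simpa using hne⟩, ?_⟩
        · intro x; simp only [Pi.neg_apply, neg_mul, Finset.sum_neg_distrib, hdx x, neg_zero]
        · simp [Finset.sum_neg_distrib, hd1]
        · simp only [Pi.neg_apply, neg_mul, Finset.sum_neg_distrib]
          linarith
    have hneg : ∃ j ∈ t, e j < 0 := by
      by_contra h
      push_neg at h
      have hall := (Finset.sum_eq_zero_iff_of_nonneg h).mp he1
      obtain ⟨j, hj, hne⟩ := hene
      exact hne (hall j hj)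
    obtain ⟨jn, hjn, hjneg⟩ := hneg
    have hne' : (t.filter (fun j => e j < 0)).Nonempty :=
      ⟨jn, Finset.mem_filter.mpr ⟨hjn, hjneg⟩⟩
    obtain ⟨j0, hj0mem, hj0min⟩ :=
      Finset.exists_min_image (t.filter (fun j => e j < 0)) (fun j => w j / (-e j)) hne'
    have hj0t : j0 ∈ t := (Finset.mem_filter.mp hj0mem).1
    have hj0neg : e j0 < 0 := (Finset.mem_filter.mp hj0mem).2
    set τ := w j0 / (-e j0) with hτ
    have hτpos : 0 < τ := div_pos (hwpos j0 hj0t) (neg_pos.mpr hj0neg)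
    set w' : ι → ℝ := fun j => w j + τ * e j with hw'def
    have hw'nonneg : ∀ j ∈ t, 0 ≤ w' j := by
      intro j hj
      rcases le_or_gt 0 (e j) with h | h
      · exact add_nonneg (hw j hj) (mul_nonneg hτpos.le h)
      · have hjmem : j ∈ t.filter (fun j => e j < 0) := Finset.mem_filter.mpr ⟨hj, h⟩
        have hmin := hj0min j hjmem
        have h2 : τ * (-e j) ≤ w j := by
          rw [← le_div_iff₀ (neg_pos.mpr h)]
          exact hmin
        simp only [hw'def]
        nlinarith
    have hej0 : e j0 ≠ 0 := ne_of_lt hj0neg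
    have hw'j0 : w' j0 = 0 := by
      have hmul : τ * e j0 = -(w j0) := by
        rw [hτ, div_mul_eq_mul_div, div_neg, mul_div_assoc, div_self hej0, mul_one]
      simp only [hw'def]
      rw [hmul]
      ring
    have hbal' : ∀ x : X, ∑ j ∈ t, w' j * (ζ j : X → ℝ) x = ∑ j ∈ t, w j * (ζ j : X → ℝ) x := by
      intro x
      simp only [hw'def, add_mul, Finset.sum_add_distrib, mul_assoc]
      rw [← Finset.mul_sum, hex x, mul_zero, add_zero]
    have hobj' : ∑ j ∈ t, w j * W (ζ j) ≤ ∑ j ∈ t, w' j * W (ζ j) := by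
      simp only [hw'def, add_mul, Finset.sum_add_distrib, mul_assoc]
      rw [← Finset.mul_sum]
      nlinarith [mul_nonneg hτpos.le heobj]
    obtain ⟨t', hsub, hcard', w'', hnn, hbal'', hobj''⟩ :=
      ih (t.erase j0) w' ζ
        (by have := Finset.card_erase_of_mem hj0t; omega)
        (fun j hj => hw'nonneg j (Finset.mem_of_mem_erase hj))
    refine ⟨t', hsub.trans (Finset.erase_subset _ _), hcard', w'', hnn, ?_, ?_⟩
    · intro x
      rw [hbal'' x, Finset.sum_erase _ (by simp [hw'j0]), hbal' x]
    · calc ∑ j ∈ t, w j * W (ζ j) ≤ ∑ j ∈ t, w' j * W (ζ j) := hobj'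
        _ = ∑ j ∈ t.erase j0, w' j * W (ζ j) := (Finset.sum_erase _ (by simp [hw'j0])).symm
        _ ≤ _ := hobj''

open Finset in
private lemma discrete_measure {X : Type*} [Fintype X] {N : ℕ} (q : Fin N → ℝ)
    (ω : Fin N → stdSimplex ℝ X) (hq : ∀ i, 0 ≤ q i) (hq1 : ∑ i, q i = 1) :
    ∃ P : ProbabilityMeasure (stdSimplex ℝ X),
      (P : Measure (stdSimplex ℝ X)) = ∑ j, ENNReal.ofReal (q j) • Measure.dirac (ω j) ∧
      ∀ h : stdSimplex ℝ X → ℝ, Continuous h →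
        ∫ ν, h ν ∂(P : Measure (stdSimplex ℝ X)) = ∑ j, q j * h (ω j) := by
  set m : Measure (stdSimplex ℝ X) := ∑ j, ENNReal.ofReal (q j) • Measure.dirac (ω j) with hm
  have hprob : IsProbabilityMeasure m := by
    constructor
    rw [hm]
    rw [Measure.finset_sum_apply]
    simp only [Measure.smul_apply, Measure.dirac_apply_of_mem (Set.mem_univ _), smul_eq_mul,
      mul_one]
    rw [← ENNReal.ofReal_sum_of_nonneg (fun i _ => hq i), hq1, ENNReal.ofReal_one]
  refine ⟨⟨m, hprob⟩, rfl, ?_⟩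
  intro h hc
  have hint : ∀ (μ' : Measure (stdSimplex ℝ X)) [IsFiniteMeasure μ'], Integrable h μ' :=
    fun μ' _ => (BoundedContinuousFunction.mkOfCompact ⟨h, hc⟩).integrable μ'
  show ∫ ν, h ν ∂m = _
  rw [hm, integral_finset_sum_measure
    (fun j _ => (hint (Measure.dirac (ω j))).smul_measure ENNReal.ofReal_ne_top)]
  refine Finset.sum_congr rfl fun j _ => ?_
  rw [integral_smul_measure, integral_dirac' h (ω j) hc.stronglyMeasurable,
    ENNReal.toReal_ofReal (hq j), smul_eq_mul]

open Finset in
/-- every exposed point `v` of `𝒱(μ)` (there is a linear functional `l` with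
`l v > l v'` for all other `v' ∈ 𝒱(μ)`) is implemented by some `P ∈ Δ²(X)` with
barycenter `μ` and support of size at most `|X|`. -/
theorem statement_3 {X : Type*} [Fintype X] [Nonempty X] {n : ℕ}
    (V : Fin n → stdSimplex ℝ X → ℝ) (hV : ∀ i, Continuous (V i))
    (μ : stdSimplex ℝ X) (v : Fin n → ℝ) (hv : v ∈ VSet V μ)
    (l : (Fin n → ℝ) →ₗ[ℝ] ℝ)
    (hexp : ∀ v' ∈ VSet V μ, v' ≠ v → l v' < l v) :
    ∃ P : ProbabilityMeasure (stdSimplex ℝ X),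
      isBary P μ ∧ finSupp P (Fintype.card X) ∧ ∀ i, expct P (V i) = v i := by
  classical
  obtain ⟨P0, hbary0, hval0⟩ := hv
  set W : stdSimplex ℝ X → ℝ := fun ν => l (fun i => V i ν) with hWdef
  have hlcont : Continuous l := l.continuous_of_finiteDimensional
  have hWcont : Continuous W := hlcont.comp (continuous_pi fun i => hV i)
  set f : stdSimplex ℝ X → (X → ℝ) × ℝ := fun ν => ((ν : X → ℝ), W ν) with hfdef
  have hfcont : Continuous f := continuous_subtype_val.prodMk hWcont
  haveI : IsProbabilityMeasure (P0 : Measure (stdSimplex ℝ X)) := P0.2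
  have hfint : Integrable f (P0 : Measure (stdSimplex ℝ X)) :=
    (BoundedContinuousFunction.mkOfCompact ⟨f, hfcont⟩).integrable _
  set z := ∫ ν, f ν ∂(P0 : Measure (stdSimplex ℝ X)) with hz
  have hzmem : z ∈ convexHull ℝ (Set.range f) :=
    (convex_convexHull ℝ _).integral_mem
      (isCompact_convexHull_of_isCompact (isCompact_range hfcont)).isClosed
      (Filter.Eventually.of_forall fun ν => subset_convexHull ℝ _ (Set.mem_range_self ν)) hfint
  rw [mem_convexHull_iff_exists_fintype] at hzmem
  obtain ⟨ι, hι, wgt, pt, hwnn, hwsum, hptmem, hrep⟩ := hzmem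
  letI := hι
  choose ζ hζ using hptmem
  have hproj : ∀ (L : ((X → ℝ) × ℝ) →L[ℝ] ℝ),
      ∑ i, wgt i * L (f (ζ i)) = ∫ ν, L (f ν) ∂(P0 : Measure (stdSimplex ℝ X)) := by
    intro L
    have h1 : L z = ∑ i, wgt i * L (pt i) := by
      rw [← hrep, map_sum]
      exact Finset.sum_congr rfl fun i _ => by rw [_root_.map_smul, smul_eq_mul]
    calc ∑ i, wgt i * L (f (ζ i)) = ∑ i, wgt i * L (pt i) :=
          Finset.sum_congr rfl fun i _ => by rw [hζ i]
      _ = L z := h1.symm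
      _ = ∫ ν, L (f ν) ∂(P0 : Measure (stdSimplex ℝ X)) := by
            rw [hz]; exact (L.integral_comp_comm hfint).symm
  -- barycenter identity
  have hbalance : ∀ x : X, ∑ i, wgt i * (ζ i : X → ℝ) x = (μ : X → ℝ) x := by
    intro x
    have h1 := hproj ((ContinuousLinearMap.proj x).comp
      (ContinuousLinearMap.fst ℝ (X → ℝ) ℝ))
    simp only [ContinuousLinearMap.comp_apply, ContinuousLinearMap.coe_fst',
      ContinuousLinearMap.proj_apply] at h1
    rw [h1]
    exact hbary0 x
  -- objective identity
  have hlv : l v = ∫ ν, W ν ∂(P0 : Measure (stdSimplex ℝ X)) := by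
    have hVvecint : Integrable (fun ν : stdSimplex ℝ X => (fun i => V i ν))
        (P0 : Measure (stdSimplex ℝ X)) :=
      (BoundedContinuousFunction.mkOfCompact ⟨_, continuous_pi hV⟩).integrable _
    have hvec : (∫ ν, (fun i => V i ν) ∂(P0 : Measure (stdSimplex ℝ X))) = v := by
      funext i
      have h3 := (ContinuousLinearMap.proj (R := ℝ) (φ := fun _ : Fin n => ℝ)
        i).integral_comp_comm hVvecint
      simp only [ContinuousLinearMap.proj_apply] at h3
      rw [← h3]
      exact hval0 i
    have h4 := (LinearMap.toContinuousLinearMap l).integral_comp_comm hVvecint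
    simp only [LinearMap.coe_toContinuousLinearMap'] at h4
    rw [← hvec]
    exact h4.symm
  have hobj : ∑ i, wgt i * W (ζ i) = l v := by
    have h1 := hproj (ContinuousLinearMap.snd ℝ (X → ℝ) ℝ)
    simp only [ContinuousLinearMap.coe_snd'] at h1
    rw [hlv]
    simpa [hfdef] using h1
  -- reduce support
  obtain ⟨t', hsub, hcard', w', hnn', hbal', hobj'⟩ :=
    reduce W (Fintype.card ι) Finset.univ wgt ζ (by simp) (fun j _ => hwnn j)
  -- pad to Fin (card X)
  obtain ⟨q, ω, hq, hω, hsumg⟩ := aux_pad t' ζ w' μ (Fintype.card X) hcard'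
  have hqnn : ∀ i, 0 ≤ q i := by
    intro i
    rcases hq i with h | ⟨j, hj, h⟩
    · exact h.ge
    · exact h ▸ hnn' j hj
  have hsums : ∀ g : stdSimplex ℝ X → ℝ, ∑ i, q i * g (ω i) = ∑ j ∈ t', w' j * g (ζ j) := by
    intro g
    simpa [smul_eq_mul] using hsumg (M := ℝ) g
  have hbalq : ∀ x : X, ∑ i, q i * (ω i : X → ℝ) x = (μ : X → ℝ) x := by
    intro x
    rw [hsums (fun ν => (ν : X → ℝ) x), hbal' x, hbalance x]
  have hq1 : ∑ i, q i = 1 := by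
    have h1 : ∀ i, q i = ∑ x : X, q i * (ω i : X → ℝ) x := by
      intro i
      rw [← Finset.mul_sum, show ∑ x : X, (ω i : X → ℝ) x = 1 from (ω i).2.2, mul_one]
    calc ∑ i, q i = ∑ i, ∑ x : X, q i * (ω i : X → ℝ) x :=
          Finset.sum_congr rfl fun i _ => h1 i
      _ = ∑ x : X, ∑ i, q i * (ω i : X → ℝ) x := Finset.sum_comm
      _ = ∑ x : X, (μ : X → ℝ) x := by simp [hbalq]
      _ = 1 := μ.2.2
  have hobjq : l v ≤ ∑ i, q i * W (ω i) := by
    rw [hsums W]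
    calc l v = ∑ i, wgt i * W (ζ i) := hobj.symm
      _ ≤ ∑ j ∈ t', w' j * W (ζ j) := hobj'
  -- build the measure
  obtain ⟨P, hPmeas, hPint⟩ := discrete_measure q ω hqnn hq1
  have hPbary : isBary P μ := by
    intro x
    have := hPint (fun ν => (ν : X → ℝ) x) ((continuous_apply x).comp continuous_subtype_val)
    rw [isBary] at *
    show ∫ ν, (ν : X → ℝ) x ∂(P : Measure (stdSimplex ℝ X)) = _
    rw [this, hbalq x]
  set v' : Fin n → ℝ := fun i => expct P (V i) with hv'def
  have hv'mem : v' ∈ VSet V μ := ⟨P, hPbary, fun i => rfl⟩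
  have hv'val : ∀ i, v' i = ∑ j, q j * V i (ω j) := fun i => hPint (V i) (hV i)
  have hlv' : l v' = ∑ j, q j * W (ω j) := by
    have hfun : v' = ∑ j, q j • (fun i => V i (ω j)) := by
      funext i
      rw [hv'val i]
      simp [Finset.sum_apply]
    rw [hfun, map_sum]
    exact Finset.sum_congr rfl fun j _ => by rw [_root_.map_smul, smul_eq_mul]
  by_cases hveq : v' = v
  · exact ⟨P, hPbary, ⟨q, ω, hqnn, hq1, hPmeas⟩, fun i => by rw [← hveq]⟩
  · exfalso
    have := hexp v' hv'mem hveq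
    rw [hlv'] at this
    linarith [hobjq]
end
end

section
/- Let μ ∈ Δ(X), let F be a face of 𝒱(μ) (i.e., F is an extreme subset of 𝒱(μ)) whose affine span has dimension k, and let v ∈ F. Then there exists P ∈ Δ²(X) with barycenter E_P[ν] = μ and support of size at most (k+1)·|X| such that v = (E_P[V^1], …, E_P[V^n]). -/
open MeasureTheory Topology Filter

noncomputable section

/-- A continuous function on a compact space is integrable w.r.t. any finite measure. -/
lemma cont_integrable {α E : Type*} [MeasurableSpace α] [TopologicalSpace α]
    [OpensMeasurableSpace α] [CompactSpace α] [SecondCountableTopology α] [NormedAddCommGroup E]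
    {f : α → E} (hf : Continuous f) (μ : Measure α) [IsFiniteMeasure μ] : Integrable f μ := by
  obtain ⟨C, hC⟩ := isCompact_univ.exists_bound_of_continuousOn hf.continuousOn
  exact (integrable_const C).mono' hf.aestronglyMeasurable
    (Filter.Eventually.of_forall fun x => hC x trivial)

lemma pad_core {ι α : Type*} {G : Type*} [AddCommMonoid G] [Module ℝ G]
    (t : Finset ι) {N : ℕ} (h : t.card ≤ N) (w : ι → ℝ) (z : ι → α) (a₀ : α) (f : α → G) :
    ∑ j : Fin N, (if hj : (j : ℕ) < t.card then w (t.equivFin.symm ⟨j, hj⟩) else 0) •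
        f (if hj : (j : ℕ) < t.card then z (t.equivFin.symm ⟨j, hj⟩) else a₀)
      = ∑ i ∈ t, w i • f (z i) := by
  classical
  set e : Fin t.card ≃ {x // x ∈ t} := t.equivFin.symm with he
  set g : ℕ → G := fun j => if hj : j < t.card then w (e ⟨j, hj⟩) • f (z (e ⟨j, hj⟩)) else 0
    with hg
  have h1 : ∀ j : Fin N, (if hj : (j : ℕ) < t.card then w (e ⟨j, hj⟩) else 0) •
      f (if hj : (j : ℕ) < t.card then z (e ⟨j, hj⟩) else a₀) = g (j : ℕ) := by
    intro j
    by_cases hj : (j : ℕ) < t.card <;> simp [g, hj]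
  calc ∑ j : Fin N, (if hj : (j : ℕ) < t.card then w (e ⟨j, hj⟩) else 0) •
        f (if hj : (j : ℕ) < t.card then z (e ⟨j, hj⟩) else a₀)
      = ∑ j : Fin N, g (j : ℕ) := Finset.sum_congr rfl fun j _ => h1 j
    _ = ∑ j ∈ Finset.range N, g j := Fin.sum_univ_eq_sum_range g N
    _ = ∑ j ∈ Finset.range t.card, g j := by
        refine (Finset.sum_subset (Finset.range_subset_range.2 h) ?_).symm
        intro j _ hj
        simp only [Finset.mem_range, not_lt] at hj
        simp [g, Nat.not_lt.2 hj]
    _ = ∑ j : Fin t.card, g (j : ℕ) := (Fin.sum_univ_eq_sum_range g t.card).symm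
    _ = ∑ j : Fin t.card, w (e j) • f (z (e j)) := by
        refine Finset.sum_congr rfl fun j _ => ?_
        simp [g, j.2]
    _ = ∑ i : {x // x ∈ t}, w i • f (z i) := Equiv.sum_comp e (fun i => w (i : ι) • f (z (i : ι)))
    _ = ∑ i ∈ t, w i • f (z i) := by rw [← Finset.sum_attach t fun i => w i • f (z i)]; rfl

/-- Padding/reindexing a finite convex combination to a `Fin N`-indexed one. -/
lemma pad_exists {ι α : Type*} {G : Type*} [AddCommMonoid G] [Module ℝ G]
    (t : Finset ι) {N : ℕ} (h : t.card ≤ N) (w : ι → ℝ) (hw : ∀ i ∈ t, 0 ≤ w i)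
    (z : ι → α) (a₀ : α) :
    ∃ (w' : Fin N → ℝ) (z' : Fin N → α), (∀ j, 0 ≤ w' j) ∧
      (∀ j, z' j ∈ insert a₀ (z '' t)) ∧ (∑ j, w' j = ∑ i ∈ t, w i) ∧
      ∀ f : α → G, ∑ j, w' j • f (z' j) = ∑ i ∈ t, w i • f (z i) := by
  classical
  refine ⟨fun j => if hj : (j : ℕ) < t.card then w (t.equivFin.symm ⟨j, hj⟩) else 0,
    fun j => if hj : (j : ℕ) < t.card then z (t.equivFin.symm ⟨j, hj⟩) else a₀, ?_, ?_, ?_, ?_⟩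
  · intro j
    by_cases hj : (j : ℕ) < t.card
    · simpa [hj] using hw _ (t.equivFin.symm ⟨j, hj⟩).2
    · simp [hj]
  · intro j
    by_cases hj : (j : ℕ) < t.card
    · simp only [hj, dif_pos]
      exact Set.mem_insert_iff.2 (Or.inr ⟨t.equivFin.symm ⟨j, hj⟩, (t.equivFin.symm ⟨j, hj⟩).2, rfl⟩)
    · simp [hj]
  · have := pad_core (G := ℝ) t h w z a₀ (fun _ => (1 : ℝ))
    simpa using this
  · exact fun f => pad_core t h w z a₀ f

/-- In a finite-dimensional normed space, the convex hull of a compact set is compact. -/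
lemma isCompact_convexHull' {E : Type*} [NormedAddCommGroup E] [NormedSpace ℝ E]
    [FiniteDimensional ℝ E] {s : Set E} (hs : IsCompact s) :
    IsCompact (convexHull ℝ s) := by
  rcases s.eq_empty_or_nonempty with rfl | ⟨a₀, ha₀⟩
  · simp
  set N : ℕ := Module.finrank ℝ E + 1 with hN
  have key : convexHull ℝ s =
      (fun q : (Fin N → ℝ) × (Fin N → E) => ∑ j, q.1 j • q.2 j) ''
        (stdSimplex ℝ (Fin N) ×ˢ Set.univ.pi fun _ => s) := by
    apply Set.Subset.antisymm
    · intro x hx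
      rw [convexHull_eq_union] at hx
      simp only [Set.mem_iUnion] at hx
      obtain ⟨t, hts, hai, hxt⟩ := hx
      have hcard : t.card ≤ N := by
        have h1 : Fintype.card {x // x ∈ t} ≤ N :=
          hai.card_le_finrank_succ.trans (Nat.add_le_add_right (Submodule.finrank_le _) 1)
        simpa [Fintype.card_coe] using h1
      rw [Finset.convexHull_eq] at hxt
      obtain ⟨w, hw0, hw1, hcm⟩ := hxt
      rw [t.centerMass_eq_of_sum_1 id hw1] at hcm
      obtain ⟨w', z', hw'0, hz', hsum1, hsum⟩ := pad_exists (G := E) t hcard w hw0 id a₀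
      refine ⟨(w', z'), ⟨⟨hw'0, by rw [hsum1, hw1]⟩, fun j _ => ?_⟩, ?_⟩
      · show z' j ∈ s
        rcases hz' j with h | h
        · rw [h]; exact ha₀
        · obtain ⟨i, hi, hzi⟩ := h
          rw [← hzi]; exact hts hi
      · simpa using (hsum id).trans hcm
    · rintro x ⟨⟨q, g⟩, ⟨hq, hg⟩, rfl⟩
      exact (convex_convexHull ℝ s).sum_mem (fun j _ => hq.1 j) hq.2
        (fun j _ => subset_convexHull ℝ s (hg j (Set.mem_univ j)))
  rw [key]
  exact ((isCompact_stdSimplex (𝕜 := ℝ) (ι := Fin N)).prod (isCompact_univ_pi fun _ => hs)).image <| by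
    apply continuous_finset_sum
    intro j _
    exact ((continuous_apply j).comp continuous_fst).smul ((continuous_apply j).comp continuous_snd)

/-- Discrete probability measures on the simplex and their expectations. -/
lemma discrete_P {X : Type*} [Fintype X] {m : ℕ} (p : Fin m → ℝ) (ν : Fin m → stdSimplex ℝ X)
    (h0 : ∀ l, 0 ≤ p l) (h1 : ∑ l, p l = 1) :
    ∃ P : ProbabilityMeasure (stdSimplex ℝ X),
      ((P : Measure (stdSimplex ℝ X)) = ∑ l, ENNReal.ofReal (p l) • Measure.dirac (ν l)) ∧
      ∀ W : stdSimplex ℝ X → ℝ, Continuous W → expct P W = ∑ l, p l * W (ν l) := by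
  set μ₀ : Measure (stdSimplex ℝ X) := ∑ l, ENNReal.ofReal (p l) • Measure.dirac (ν l) with hμ₀
  have hprob : IsProbabilityMeasure μ₀ := by
    constructor
    rw [hμ₀]
    simp only [Measure.coe_finset_sum, Measure.smul_apply, Finset.sum_apply, smul_eq_mul,
      Measure.dirac_apply_of_mem (Set.mem_univ _), mul_one]
    rw [← ENNReal.ofReal_sum_of_nonneg (fun l _ => h0 l), h1, ENNReal.ofReal_one]
  refine ⟨⟨μ₀, hprob⟩, rfl, fun W hW => ?_⟩
  have hint : ∀ l : Fin m, Integrable W (ENNReal.ofReal (p l) • Measure.dirac (ν l)) := by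
    intro l
    have : IsFiniteMeasure (ENNReal.ofReal (p l) • Measure.dirac (ν l)) := by
      constructor
      simp [Measure.smul_apply, Measure.dirac_apply_of_mem (Set.mem_univ _),
        ENNReal.ofReal_lt_top]
    exact cont_integrable hW _
  show ∫ x, W x ∂μ₀ = _
  rw [hμ₀, integral_finset_sum_measure fun l _ => hint l]
  refine Finset.sum_congr rfl fun l _ => ?_
  rw [integral_smul_measure, integral_dirac, ENNReal.toReal_ofReal (h0 l), smul_eq_mul]

section Rep
variable {X : Type*} [Fintype X] [Nonempty X] {n : ℕ}

/-- From a finite representation with barycenter `μ`, the total mass is 1. -/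
lemma sum_eq_one_of_bary {m : ℕ} (p : Fin m → ℝ) (ν : Fin m → stdSimplex ℝ X)
    (μ : stdSimplex ℝ X) (hbar : ∀ x, ∑ l, p l * (ν l : X → ℝ) x = (μ : X → ℝ) x) :
    ∑ l, p l = 1 := by
  have : ∑ x : X, ∑ l, p l * (ν l : X → ℝ) x = ∑ x : X, (μ : X → ℝ) x :=
    Finset.sum_congr rfl fun x _ => hbar x
  rw [Finset.sum_comm] at this
  have hl : ∀ l : Fin m, ∑ x : X, p l * (ν l : X → ℝ) x = p l := by
    intro l
    rw [← Finset.mul_sum, stdSimplex.sum_eq_one (ν l), mul_one]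
  rw [Finset.sum_congr rfl fun l _ => hl l] at this
  rw [this, stdSimplex.sum_eq_one μ]

/-- A finite representation with barycenter `μ` gives an element of `VSet`. -/
lemma mem_VSet_of_rep (V : Fin n → stdSimplex ℝ X → ℝ) (hV : ∀ i, Continuous (V i))
    (μ : stdSimplex ℝ X) {m : ℕ} (p : Fin m → ℝ) (ν : Fin m → stdSimplex ℝ X)
    (h0 : ∀ l, 0 ≤ p l) (hbar : ∀ x, ∑ l, p l * (ν l : X → ℝ) x = (μ : X → ℝ) x) :
    ∃ P : ProbabilityMeasure (stdSimplex ℝ X), isBary P μ ∧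
      ((P : Measure (stdSimplex ℝ X)) = ∑ l, ENNReal.ofReal (p l) • Measure.dirac (ν l)) ∧
      ∀ i, expct P (V i) = ∑ l, p l * V i (ν l) := by
  obtain ⟨P, hPm, hPe⟩ := discrete_P p ν h0 (sum_eq_one_of_bary p ν μ hbar)
  refine ⟨P, fun x => ?_, hPm, fun i => hPe _ (hV i)⟩
  exact (hPe (fun ν₀ : stdSimplex ℝ X => (ν₀ : X → ℝ) x)
    (Continuous.comp (continuous_apply x) continuous_subtype_val)).trans (hbar x)

lemma rep_mem_VSet (V : Fin n → stdSimplex ℝ X → ℝ) (hV : ∀ i, Continuous (V i))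
    (μ : stdSimplex ℝ X) {m : ℕ} (p : Fin m → ℝ) (ν : Fin m → stdSimplex ℝ X)
    (h0 : ∀ l, 0 ≤ p l) (hbar : ∀ x, ∑ l, p l * (ν l : X → ℝ) x = (μ : X → ℝ) x) :
    (fun i => ∑ l, p l * V i (ν l)) ∈ VSet V μ := by
  obtain ⟨P, hb, _, he⟩ := mem_VSet_of_rep V hV μ p ν h0 hbar
  exact ⟨P, hb, he⟩

/-- Stage 1: every element of `VSet` has a finite representation. -/
lemma exists_rep (V : Fin n → stdSimplex ℝ X → ℝ) (hV : ∀ i, Continuous (V i))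
    (μ : stdSimplex ℝ X) {v : Fin n → ℝ} (hv : v ∈ VSet V μ) :
    ∃ (m : ℕ) (p : Fin m → ℝ) (ν : Fin m → stdSimplex ℝ X), (∀ l, 0 ≤ p l) ∧
      (∀ x, ∑ l, p l * (ν l : X → ℝ) x = (μ : X → ℝ) x) ∧
      (∀ i, ∑ l, p l * V i (ν l) = v i) := by
  classical
  obtain ⟨P, hbar, hexp⟩ := hv
  set Φ : stdSimplex ℝ X → (X → ℝ) × (Fin n → ℝ) := fun ν => ((ν : X → ℝ), fun i => V i ν)
    with hΦdef
  have hΦc : Continuous Φ :=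
    continuous_subtype_val.prodMk (continuous_pi fun i => hV i)
  have hΦint : Integrable Φ (P : Measure (stdSimplex ℝ X)) := cont_integrable hΦc _
  have hclosed : IsClosed (convexHull ℝ (Set.range Φ)) :=
    (isCompact_convexHull' (isCompact_range hΦc)).isClosed
  have hmem : (∫ ν, Φ ν ∂(P : Measure (stdSimplex ℝ X))) ∈ convexHull ℝ (Set.range Φ) :=
    (convex_convexHull ℝ _).integral_mem hclosed
      (Filter.Eventually.of_forall fun ν => subset_convexHull ℝ _ ⟨ν, rfl⟩) hΦint
  have hval : (∫ ν, Φ ν ∂(P : Measure (stdSimplex ℝ X))) = ((μ : X → ℝ), v) := by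
    have h1 : Integrable (fun ν : stdSimplex ℝ X => (ν : X → ℝ))
        (P : Measure (stdSimplex ℝ X)) := cont_integrable continuous_subtype_val _
    have h2 : Integrable (fun ν : stdSimplex ℝ X => (fun i => V i ν : Fin n → ℝ))
        (P : Measure (stdSimplex ℝ X)) := cont_integrable (continuous_pi fun i => hV i) _
    rw [show (∫ ν, Φ ν ∂(P : Measure (stdSimplex ℝ X))) = ∫ ν,
        ((fun ν₀ : stdSimplex ℝ X => (ν₀ : X → ℝ)) ν,
         (fun ν₀ : stdSimplex ℝ X => (fun i => V i ν₀ : Fin n → ℝ)) ν)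
        ∂(P : Measure (stdSimplex ℝ X)) from rfl, integral_pair h1 h2]
    refine Prod.ext ?_ ?_
    · funext x
      have := (ContinuousLinearMap.proj (R := ℝ) (φ := fun _ : X => ℝ) x).integral_comp_comm h1
      simpa using this.symm.trans (hbar x)
    · funext i
      have := (ContinuousLinearMap.proj (R := ℝ) (φ := fun _ : Fin n => ℝ) i).integral_comp_comm h2
      simpa using this.symm.trans (hexp i)
  rw [hval] at hmem
  rw [convexHull_eq] at hmem
  obtain ⟨ι, t, w, z, hw0, hw1, hz, hcm⟩ := hmem
  rw [t.centerMass_eq_of_sum_1 z hw1] at hcm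
  set g : ι → stdSimplex ℝ X := fun i => if h : ∃ ν, Φ ν = z i then h.choose else μ with hgdef
  have hgz : ∀ i ∈ t, Φ (g i) = z i := by
    intro i hi
    obtain ⟨ν', hν'⟩ := hz i hi
    have hex : ∃ ν₀, Φ ν₀ = z i := ⟨ν', hν'⟩
    simp only [g, dif_pos hex]
    exact hex.choose_spec
  obtain ⟨p, νf, hp0, _, _, hsum⟩ := pad_exists (G := ℝ) t le_rfl w hw0 g μ
  refine ⟨t.card, p, νf, hp0, ?_, ?_⟩
  · intro x
    have := hsum (fun ν₀ => (ν₀ : X → ℝ) x)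
    simp only [smul_eq_mul] at this
    rw [this]
    have : ∑ i ∈ t, w i • ((g i : X → ℝ) x) = ((μ : X → ℝ) x) := by
      have hfst := congrArg Prod.fst hcm
      have : ∑ i ∈ t, w i • (z i).1 = (μ : X → ℝ) := by
        simpa [Prod.fst_sum, Prod.smul_fst] using hfst
      calc ∑ i ∈ t, w i • ((g i : X → ℝ) x) = ∑ i ∈ t, w i • ((z i).1 x) :=
            Finset.sum_congr rfl fun i hi => by rw [← hgz i hi]
        _ = (∑ i ∈ t, w i • (z i).1) x := by
            simp [Finset.sum_apply]
        _ = (μ : X → ℝ) x := by rw [this]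
    simpa using this
  · intro i
    have := hsum (fun ν₀ => V i ν₀)
    simp only [smul_eq_mul] at this
    rw [this]
    have hsnd := congrArg Prod.snd hcm
    have h2 : ∑ i' ∈ t, w i' • (z i').2 = v := by
      simpa [Prod.snd_sum, Prod.smul_snd] using hsnd
    calc ∑ i' ∈ t, w i' • V i (g i') = ∑ i' ∈ t, w i' • ((z i').2 i) :=
          Finset.sum_congr rfl fun i' hi' => by rw [← hgz i' hi']
      _ = (∑ i' ∈ t, w i' • (z i').2) i := by
          simp [Finset.sum_apply]
      _ = v i := by rw [h2]

end Rep


/-- if `F` is a face (extreme subset) of `𝒱(μ)` whose affine span has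
dimension `k`, then every `v ∈ F` is implemented by some `P ∈ Δ²(X)` with barycenter `μ`
and support of size at most `(k+1)·|X|`. -/
theorem statement_5 {X : Type*} [Fintype X] [Nonempty X] {n : ℕ}
    (V : Fin n → stdSimplex ℝ X → ℝ) (hV : ∀ i, Continuous (V i))
    (μ : stdSimplex ℝ X) (F : Set (Fin n → ℝ))
    (hF : IsExtreme ℝ (VSet V μ) F)
    (k : ℕ) (hk : Module.finrank ℝ (affineSpan ℝ F).direction = k)
    (v : Fin n → ℝ) (hv : v ∈ F) :
    ∃ P : ProbabilityMeasure (stdSimplex ℝ X),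
      isBary P μ ∧ finSupp P ((k + 1) * Fintype.card X) ∧ ∀ i, expct P (V i) = v i := by
  classical
  obtain ⟨m, p₀, ν, hp₀0, hp₀bar, hp₀exp⟩ := exists_rep V hV μ (hF.1 hv)
  set W := (affineSpan ℝ F).direction with hW
  set Q : Set (Fin m → ℝ) := {p | (∀ l, 0 ≤ p l) ∧
      (∀ x, ∑ l, p l * (ν l : X → ℝ) x = (μ : X → ℝ) x) ∧
      (∀ i, ∑ l, p l * V i (ν l) = v i)} with hQdef
  have hQsum : ∀ p ∈ Q, ∑ l, p l = 1 := fun p hp => sum_eq_one_of_bary p ν μ hp.2.1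
  have hQconv : Convex ℝ Q := by
    intro p hp q hq a b ha hb hab
    have hcomb : ∀ (c : Fin m → ℝ),
        ∑ l, (a • p + b • q) l * c l = a * (∑ l, p l * c l) + b * (∑ l, q l * c l) := by
      intro c
      simp only [Pi.add_apply, Pi.smul_apply, smul_eq_mul, add_mul, Finset.sum_add_distrib,
        Finset.mul_sum, mul_assoc]
    refine ⟨fun l => add_nonneg (mul_nonneg ha (hp.1 l)) (mul_nonneg hb (hq.1 l)),
      fun x => ?_, fun i => ?_⟩
    · rw [hcomb, hp.2.1 x, hq.2.1 x, ← add_mul, hab, one_mul]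
    · rw [hcomb, hp.2.2 i, hq.2.2 i, ← add_mul, hab, one_mul]
  have hQclosed : IsClosed Q := by
    have h1 : IsClosed {p : Fin m → ℝ | ∀ l, 0 ≤ p l} := by
      rw [Set.setOf_forall]
      exact isClosed_iInter fun l => isClosed_le continuous_const (continuous_apply l)
    have hc : ∀ c : Fin m → ℝ, Continuous (fun p : Fin m → ℝ => ∑ l, p l * c l) :=
      fun c => continuous_finset_sum _ fun l _ => (continuous_apply l).mul continuous_const
    have h2 : IsClosed {p : Fin m → ℝ | ∀ x, ∑ l, p l * (ν l : X → ℝ) x = (μ : X → ℝ) x} := by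
      rw [Set.setOf_forall]
      exact isClosed_iInter fun x => isClosed_eq (hc _) continuous_const
    have h3 : IsClosed {p : Fin m → ℝ | ∀ i, ∑ l, p l * V i (ν l) = v i} := by
      rw [Set.setOf_forall]
      exact isClosed_iInter fun i => isClosed_eq (hc _) continuous_const
    rw [hQdef, show {p : Fin m → ℝ | (∀ l, 0 ≤ p l) ∧
        (∀ x, ∑ l, p l * (ν l : X → ℝ) x = (μ : X → ℝ) x) ∧
        (∀ i, ∑ l, p l * V i (ν l) = v i)} =
      {p : Fin m → ℝ | ∀ l, 0 ≤ p l} ∩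
        ({p : Fin m → ℝ | ∀ x, ∑ l, p l * (ν l : X → ℝ) x = (μ : X → ℝ) x} ∩
         {p : Fin m → ℝ | ∀ i, ∑ l, p l * V i (ν l) = v i}) from rfl]
    exact h1.inter (h2.inter h3)
  have hQcomp : IsCompact Q := by
    refine IsCompact.of_isClosed_subset (isCompact_Icc (a := (0 : Fin m → ℝ)) (b := 1))
      hQclosed ?_
    intro p hp
    refine Set.mem_Icc.2 ⟨fun l => hp.1 l, fun l => ?_⟩
    calc p l ≤ ∑ l', p l' := Finset.single_le_sum (fun l' _ => hp.1 l') (Finset.mem_univ l)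
      _ = 1 := hQsum p hp
  obtain ⟨q, hq⟩ := hQcomp.extremePoints_nonempty ⟨p₀, hp₀0, hp₀bar, hp₀exp⟩
  have hqQ : q ∈ Q := hq.1
  set s : Finset (Fin m) := Finset.univ.filter (fun l => q l ≠ 0) with hs
  have hq0 : ∀ l ∉ s, q l = 0 := by
    intro l hl
    by_contra h
    exact hl (Finset.mem_filter.2 ⟨Finset.mem_univ l, h⟩)
  have hqpos : ∀ l : {l // l ∈ s}, 0 < q l := by
    intro l
    have h1 := (Finset.mem_filter.1 l.2).2
    exact lt_of_le_of_ne (hqQ.1 l) (Ne.symm h1)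
  -- the two linear maps
  set A : ({l // l ∈ s} → ℝ) →ₗ[ℝ] (X → ℝ) :=
    { toFun := fun d => fun x => ∑ l : {l // l ∈ s}, d l * (ν l : X → ℝ) x,
      map_add' := by
        intro d1 d2; funext x
        simp [add_mul, Finset.sum_add_distrib]
      map_smul' := by
        intro c d; funext x
        simp [Finset.mul_sum, mul_assoc] } with hA
  set B : ({l // l ∈ s} → ℝ) →ₗ[ℝ] (Fin n → ℝ) :=
    { toFun := fun d => fun i => ∑ l : {l // l ∈ s}, d l * V i (ν l),
      map_add' := by
        intro d1 d2; funext i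
        simp [add_mul, Finset.sum_add_distrib]
      map_smul' := by
        intro c d; funext i
        simp [Finset.mul_sum, mul_assoc] } with hB
  -- the key perturbation claim
  have key : ∀ d : {l // l ∈ s} → ℝ, A d = 0 → B d ∈ W ∧ (B d = 0 → d = 0) := by
    intro d hAd
    obtain ⟨ε, hε, hsmall⟩ : ∃ ε : ℝ, 0 < ε ∧ ∀ l : {l // l ∈ s}, |ε * d l| ≤ q l := by
      rcases isEmpty_or_nonempty {l // l ∈ s} with h | h
      · exact ⟨1, one_pos, fun l => h.elim l⟩
      · refine ⟨Finset.univ.inf' Finset.univ_nonempty (fun l : {l // l ∈ s} =>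
          q l / (|d l| + 1)), ?_, ?_⟩
        · rw [Finset.lt_inf'_iff]
          intro l _
          exact div_pos (hqpos l) (by positivity)
        · intro l
          have h1 : Finset.univ.inf' Finset.univ_nonempty (fun l : {l // l ∈ s} =>
              q l / (|d l| + 1)) ≤ q l / (|d l| + 1) :=
            Finset.inf'_le _ (Finset.mem_univ l)
          have h2 : 0 < Finset.univ.inf' Finset.univ_nonempty (fun l : {l // l ∈ s} =>
              q l / (|d l| + 1)) := by
            rw [Finset.lt_inf'_iff]
            intro l' _
            exact div_pos (hqpos l') (by positivity)
          rw [abs_mul, abs_of_pos h2]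
          calc _ ≤ (q l / (|d l| + 1)) * |d l| :=
                mul_le_mul_of_nonneg_right h1 (abs_nonneg _)
            _ ≤ q l := by
                rw [div_mul_eq_mul_div, div_le_iff₀ (by positivity)]
                nlinarith [abs_nonneg (d l), (hqpos l).le]
    set D : Fin m → ℝ := fun l => if h : l ∈ s then ε * d ⟨l, h⟩ else 0 with hD
    have hDabs : ∀ l, |D l| ≤ q l := by
      intro l
      by_cases h : l ∈ s
      · simpa [D, h] using hsmall ⟨l, h⟩
      · simp [D, h, hqQ.1 l]
    have htrans : ∀ f : stdSimplex ℝ X → ℝ,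
        ∑ l, D l * f (ν l) = ε * ∑ l : {l // l ∈ s}, d l * f (ν l) := by
      intro f
      calc ∑ l, D l * f (ν l) = ∑ l ∈ s, D l * f (ν l) :=
            (Finset.sum_subset (Finset.subset_univ s)
              (fun l _ hl => by simp [D, hl])).symm
        _ = ∑ l : {l // l ∈ s}, D l * f (ν l) := (Finset.sum_coe_sort s _).symm
        _ = ∑ l : {l // l ∈ s}, ε * (d l * f (ν l)) := by
            refine Finset.sum_congr rfl fun l _ => ?_
            simp [D, l.2, mul_assoc]
        _ = ε * ∑ l : {l // l ∈ s}, d l * f (ν l) := (Finset.mul_sum _ _ _).symm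
    have hnn1 : ∀ l, 0 ≤ q l + D l := by
      intro l; have := abs_le.1 (hDabs l); linarith [this.1]
    have hnn2 : ∀ l, 0 ≤ q l - D l := by
      intro l; have := abs_le.1 (hDabs l); linarith [this.2]
    have hAdx : ∀ x, ∑ l : {l // l ∈ s}, d l * (ν l : X → ℝ) x = 0 := by
      intro x
      exact congrFun hAd x
    have hbar1 : ∀ x, ∑ l, (q l + D l) * (ν l : X → ℝ) x = (μ : X → ℝ) x := by
      intro x
      simp only [add_mul, Finset.sum_add_distrib]
      rw [hqQ.2.1 x, htrans (fun ν₀ => (ν₀ : X → ℝ) x), hAdx x, mul_zero, add_zero]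
    have hbar2 : ∀ x, ∑ l, (q l - D l) * (ν l : X → ℝ) x = (μ : X → ℝ) x := by
      intro x
      simp only [sub_mul, Finset.sum_sub_distrib]
      rw [hqQ.2.1 x, htrans (fun ν₀ => (ν₀ : X → ℝ) x), hAdx x, mul_zero, sub_zero]
    have hexp1 : ∀ i, ∑ l, (q l + D l) * V i (ν l) = v i + ε * B d i := by
      intro i
      simp only [add_mul, Finset.sum_add_distrib]
      rw [hqQ.2.2 i, htrans (fun ν₀ => V i ν₀)]
      rfl
    have hexp2 : ∀ i, ∑ l, (q l - D l) * V i (ν l) = v i - ε * B d i := by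
      intro i
      simp only [sub_mul, Finset.sum_sub_distrib]
      rw [hqQ.2.2 i, htrans (fun ν₀ => V i ν₀)]
      rfl
    have hu1 : v + ε • B d ∈ VSet V μ := by
      have h := rep_mem_VSet V hV μ (fun l => q l + D l) ν hnn1 hbar1
      convert h using 1
      funext i
      rw [hexp1 i]
      rfl
    have hu2 : v - ε • B d ∈ VSet V μ := by
      have h := rep_mem_VSet V hV μ (fun l => q l - D l) ν hnn2 hbar2
      convert h using 1
      funext i
      rw [hexp2 i]
      rfl
    have hseg : v ∈ openSegment ℝ (v + ε • B d) (v - ε • B d) :=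
      ⟨1/2, 1/2, by norm_num, by norm_num, by norm_num, by module⟩
    obtain h1F := hF.2 hu1 hu2 hv hseg
    constructor
    · have hvs : (v + ε • B d) -ᵥ v ∈ W :=
        AffineSubspace.vsub_mem_direction (subset_affineSpan ℝ F h1F) (subset_affineSpan ℝ F hv)
      have hvs' : ε • B d ∈ W := by
        simpa [vsub_eq_sub] using hvs
      have := W.smul_mem ε⁻¹ hvs'
      rwa [inv_smul_smul₀ (ne_of_gt hε)] at this
    · intro hBd0
      have hmem1 : q + D ∈ Q := by
        refine ⟨fun l => hnn1 l, fun x => hbar1 x, fun i => ?_⟩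
        show ∑ l, (q l + D l) * V i (ν l) = v i
        rw [hexp1 i, hBd0]
        simp
      have hmem2 : q - D ∈ Q := by
        refine ⟨fun l => hnn2 l, fun x => hbar2 x, fun i => ?_⟩
        show ∑ l, (q l - D l) * V i (ν l) = v i
        rw [hexp2 i, hBd0]
        simp
      have hseg' : q ∈ openSegment ℝ (q + D) (q - D) :=
        ⟨1/2, 1/2, by norm_num, by norm_num, by norm_num, by module⟩
      have h := hq.2 hmem1 hmem2 hseg'
      have hD0 : D = 0 := by
        have := h
        have h2 : q + D - q = 0 := by rw [this]; abel
        simpa using h2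
      funext l
      have : D l = ε * d l := by simp [D, l.2]
      rw [hD0] at this
      have := this.symm
      simp only [Pi.zero_apply] at this
      exact (mul_eq_zero.1 this).resolve_left (ne_of_gt hε)
  -- dimension count
  have hcard : s.card ≤ Fintype.card X + k := by
    have hKer : ∀ c : LinearMap.ker A, B c.1 ∈ W :=
      fun c => (key c.1 (LinearMap.mem_ker.1 c.2)).1
    set C : LinearMap.ker A →ₗ[ℝ] W :=
      LinearMap.codRestrict W (B.comp (LinearMap.ker A).subtype) (fun c => hKer c) with hC
    have hCinj : Function.Injective C := by
      rw [← LinearMap.ker_eq_bot, LinearMap.ker_eq_bot']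
      rintro ⟨d, hd⟩ h0
      have hBd : B d = 0 := by
        have := congrArg Subtype.val (congrArg (fun z => z) h0)
        exact congrArg Subtype.val h0
      have hd' : d = 0 := (key d (LinearMap.mem_ker.1 hd)).2 hBd
      exact Subtype.ext hd'
    have h1 : Module.finrank ℝ (LinearMap.ker A) ≤ k := by
      rw [← hk]
      exact LinearMap.finrank_le_finrank_of_injective hCinj
    have h2 : Module.finrank ℝ (LinearMap.range A) ≤ Fintype.card X := by
      refine (Submodule.finrank_le _).trans ?_
      rw [Module.finrank_fintype_fun_eq_card]
    have h3 : Module.finrank ℝ ({l // l ∈ s} → ℝ) = s.card := by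
      rw [Module.finrank_fintype_fun_eq_card, Fintype.card_coe]
    have h4 := LinearMap.finrank_range_add_finrank_ker A
    omega
  have hble : s.card ≤ (k + 1) * Fintype.card X := by
    have hX : 1 ≤ Fintype.card X := Fintype.card_pos
    have : k * 1 ≤ k * Fintype.card X := Nat.mul_le_mul_left k hX
    calc s.card ≤ Fintype.card X + k := hcard
      _ ≤ Fintype.card X + k * Fintype.card X := by omega
      _ = (k + 1) * Fintype.card X := by ring
  -- final construction
  obtain ⟨p', ν', hp'0, _, _, hsum'⟩ :=
    pad_exists (G := ℝ) s hble q (fun l _ => hqQ.1 l) ν μ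
  have htr : ∀ f : stdSimplex ℝ X → ℝ, ∑ j, p' j * f (ν' j) = ∑ l, q l * f (ν l) := by
    intro f
    have h1 := hsum' f
    simp only [smul_eq_mul] at h1
    rw [h1]
    exact Finset.sum_subset (Finset.subset_univ s) (fun l _ hl => by rw [hq0 l hl, zero_mul])
  have hbar' : ∀ x, ∑ j, p' j * (ν' j : X → ℝ) x = (μ : X → ℝ) x := by
    intro x
    rw [htr (fun ν₀ => (ν₀ : X → ℝ) x)]
    exact hqQ.2.1 x
  obtain ⟨P, hPbary, hPmeas, hPexp⟩ := mem_VSet_of_rep V hV μ p' ν' hp'0 hbar'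
  refine ⟨P, hPbary, ⟨p', ν', hp'0, ?_, hPmeas⟩, fun i => ?_⟩
  · have := htr (fun _ => (1 : ℝ))
    simpa using this.trans (by simpa using hQsum q hqQ)
  · rw [hPexp i, htr (fun ν₀ => V i ν₀)]
    exact hqQ.2.2 i
end
end

section
/- Let F : Δ(X) → ℝ be continuous, let H : Δ(X) → ℝ be the Shannon entropy H(ν) = −Σ_{x∈X} ν(x)·log ν(x), let f : ℝ → ℝ be continuous, and fix μ ∈ Δ(X). Then: (i) the supremum of E_P[F] − f(E_P[H(μ) − H(ν)]) over all P ∈ Δ²(X) with barycenter E_P[ν] = μ is attained by some P* with support of size at most 2·|X|; (ii) if moreover f is differentiable, then, writing c* = E_{P*}[H(μ) − H(ν)], such a maximizer P* also maximizes E_P[F(ν)] − f'(c*)·E_P[H(μ) − H(ν)] over all P ∈ Δ²(X) with barycenter μ. -/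
/-!
Record a posterior `ν` by its moment `(ν, F ν, H(μ) - H(ν))` in `ℝ^X × ℝ × ℝ`. Both objectives
depend on `P` only through its integrated moment, and the integrated moments of the measures with
barycenter `μ` form the convex hull of the compact image of the moment map, cut by the affine
constraint that the first component equals `μ`. This set is compact, so the continuous objective
`b ↦ b.2.1 - f b.2.2` attains its maximum on it, and Carathéodory's theorem, applied inside the
hyperplane `∑ₓ ν x = 1` of dimension `|X| + 1`, writes the maximizer as the moment of at most
`|X| + 2 ≤ 2|X|` Dirac masses (for `|X| = 1` the simplex is a point). Part (ii) is the
first-order condition for this maximum over a convex set.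
-/

open MeasureTheory Topology Filter

noncomputable section

/-- The Shannon entropy `H(ν) = -Σ_x ν(x)·log ν(x)` on the simplex `Δ(X)`. -/
def entH {X : Type*} [Fintype X] (ν : stdSimplex ℝ X) : ℝ :=
  -∑ x, (ν : X → ℝ) x * Real.log ((ν : X → ℝ) x)

open Set Function Module

theorem Fintype.sum_extend_extend {ι κ R β M : Type*} [Fintype ι] [Fintype κ] [Zero R]
    [AddCommMonoid M] {e : ι → κ} (he : Injective e) (w : ι → R) (ν : ι → β) (ν₀ : κ → β)
    (φ : R → β → M) (hφ : ∀ b, φ 0 b = 0) :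
    ∑ j, φ (extend e w 0 j) (extend e ν ν₀ j) = ∑ i, φ (w i) (ν i) := by
  refine (Fintype.sum_of_injective e he _ _ (fun j hj => ?_) fun i => ?_).symm
  · rw [extend_apply' _ _ _ hj, Pi.zero_apply, hφ]
  · rw [he.extend_apply, he.extend_apply]

section Caratheodory

variable {α E : Type*} [NormedAddCommGroup E] [NormedSpace ℝ E] [FiniteDimensional ℝ E]
  {g : α → E}

theorem exists_stdSimplex_sum_eq_of_mem_convexHull_range {N : ℕ}
    (hN : finrank ℝ (vectorSpan ℝ (range g)) < N) {b : E} (hb : b ∈ convexHull ℝ (range g)) :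
    ∃ w ∈ stdSimplex ℝ (Fin N), ∃ ν : Fin N → α, ∑ j, w j • g (ν j) = b := by
  classical
  obtain ⟨-, a, -⟩ := convexHull_nonempty_iff.mp ⟨b, hb⟩
  obtain ⟨ι, _, z, w, hzg, hz, hw_pos, hw_sum, rfl⟩ := eq_pos_convex_span_of_mem_convexHull hb
  choose ν hν using fun i => hzg (mem_range_self i)
  have hcard : Fintype.card ι ≤ N := by
    have := Submodule.finrank_mono (vectorSpan_mono ℝ hzg)
    have := hz.card_le_finrank_succ
    omega
  obtain ⟨e⟩ := Function.Embedding.nonempty_of_card_le (hcard.trans (Fintype.card_fin N).ge)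
  refine ⟨extend e w 0, ⟨fun j => ?_, ?_⟩, extend e ν fun _ => a, ?_⟩
  · by_cases hj : ∃ i, e i = j
    · obtain ⟨i, rfl⟩ := hj
      exact e.injective.extend_apply w 0 i ▸ (hw_pos i).le
    · rw [extend_apply' _ _ _ hj, Pi.zero_apply]
  · simpa [hw_sum] using Fintype.sum_extend_extend e.injective w ν (fun _ => a)
      (fun c _ => c) fun _ => rfl
  · simpa [hν] using Fintype.sum_extend_extend e.injective w ν (fun _ => a)
      (fun c a => c • g a) fun _ => zero_smul ℝ _

variable [TopologicalSpace α] [CompactSpace α]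

theorem isCompact_convexHull_range (hg : Continuous g) : IsCompact (convexHull ℝ (range g)) := by
  set N := finrank ℝ E + 1
  have hhull : convexHull ℝ (range g) = (fun p : (Fin N → ℝ) × (Fin N → α) =>
      ∑ j, p.1 j • g (p.2 j)) '' (stdSimplex ℝ (Fin N) ×ˢ univ) := by
    refine Subset.antisymm (fun b hb => ?_) ?_
    · obtain ⟨w, hw, ν, rfl⟩ := exists_stdSimplex_sum_eq_of_mem_convexHull_range
        (Nat.lt_succ_of_le (Submodule.finrank_le _)) hb
      exact ⟨(w, ν), ⟨hw, mem_univ _⟩, rfl⟩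
    · rintro _ ⟨⟨w, ν⟩, ⟨hw, -⟩, rfl⟩
      exact (convex_convexHull ℝ _).sum_mem (fun j _ => hw.1 j) hw.2
        fun j _ => subset_convexHull ℝ _ (mem_range_self _)
  rw [hhull]
  exact ((isCompact_stdSimplex _ _).prod isCompact_univ).image (by fun_prop)

theorem integral_mem_convexHull_range [MeasurableSpace α] [OpensMeasurableSpace α]
    (hg : Continuous g) (P : Measure α) [IsProbabilityMeasure P] :
    ∫ a, g a ∂P ∈ convexHull ℝ (range g) :=
  (convex_convexHull ℝ _).integral_mem (isCompact_convexHull_range hg).isClosed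
    (ae_of_all _ fun a => subset_convexHull ℝ _ (mem_range_self a))
    (hg.integrable_of_hasCompactSupport (.of_compactSpace g))

end Caratheodory

section SumDirac

variable {α : Type*} [MeasurableSpace α] {N : ℕ}

def sumDirac (w : stdSimplex ℝ (Fin N)) (ν : Fin N → α) : ProbabilityMeasure α :=
  ⟨∑ j, ENNReal.ofReal (w.1 j) • Measure.dirac (ν j), ⟨by
    simp [← ENNReal.ofReal_sum_of_nonneg fun j _ => w.2.1 j, w.2.2]⟩⟩

theorem integral_sumDirac {E : Type*} [NormedAddCommGroup E] [NormedSpace ℝ E]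
    [CompleteSpace E] (w : stdSimplex ℝ (Fin N)) (ν : Fin N → α) {g : α → E}
    (hg : StronglyMeasurable g) :
    ∫ a, g a ∂(sumDirac w ν : Measure α) = ∑ j, w.1 j • g (ν j) := by
  rw [sumDirac, ProbabilityMeasure.coe_mk, integral_finsetSum_measure fun j _ =>
    (integrable_dirac' hg enorm_lt_top).smul_measure ENNReal.ofReal_ne_top]
  simp [integral_smul_measure, integral_dirac' _ _ hg, ENNReal.toReal_ofReal (w.2.1 _)]

end SumDirac

theorem IsMaxOn.hasFDerivAt_apply_sub_nonpos {E : Type*} [NormedAddCommGroup E]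
    [NormedSpace ℝ E] {s : Set E} (hs : Convex ℝ s) {φ : E → ℝ} {φ' : E →L[ℝ] ℝ} {a b : E}
    (hmax : IsMaxOn φ s a) (hφ : HasFDerivAt φ φ' a) (ha : a ∈ s) (hb : b ∈ s) : φ' (b - a) ≤ 0 :=
  hmax.localize.hasFDerivWithinAt_nonpos hφ.hasFDerivWithinAt
    (sub_mem_posTangentConeAt_of_segment_subset (hs.segment_subset ha hb))

section InformationAcquisition

variable {X : Type*} [Fintype X]

theorem continuous_entH : Continuous (entH : stdSimplex ℝ X → ℝ) :=
  (continuous_finsetSum _ fun x _ =>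
    Real.continuous_mul_log.comp ((continuous_apply x).comp continuous_subtype_val)).neg

def moment (F : stdSimplex ℝ X → ℝ) (μ ν : stdSimplex ℝ X) : (X → ℝ) × ℝ × ℝ :=
  ((ν : X → ℝ), F ν, entH μ - entH ν)

/-- Exactly the set of moments `∫ moment F μ ∂P` of the measures `P` with barycenter `μ`. -/
def momentSet (F : stdSimplex ℝ X → ℝ) (μ : stdSimplex ℝ X) : Set ((X → ℝ) × ℝ × ℝ) :=
  convexHull ℝ (range (moment F μ)) ∩ {(μ : X → ℝ)} ×ˢ univ

variable {F : stdSimplex ℝ X → ℝ} (μ : stdSimplex ℝ X)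

/-- The moment map takes values in the affine hyperplane `∑ₓ b.1 x = 1`; when `|X| = 1` the
simplex is a point. -/
theorem finrank_vectorSpan_range_moment_lt :
    finrank ℝ (vectorSpan ℝ (range (moment F μ))) < 2 * Fintype.card X := by
  have hX : 0 < Fintype.card X := by
    refine Fintype.card_pos_iff.mpr (not_isEmpty_iff.mp fun h => ?_)
    simpa using μ.2.2
  rcases Nat.lt_or_ge 1 (Fintype.card X) with hcard | hcard
  · let ℓ : ((X → ℝ) × ℝ × ℝ) →ₗ[ℝ] ℝ :=
      (∑ x, LinearMap.proj x) ∘ₗ LinearMap.fst ℝ (X → ℝ) (ℝ × ℝ)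
    have hℓ (ν : stdSimplex ℝ X) : ℓ (moment F μ ν) = 1 := by simp [ℓ, moment]
    have hspan : vectorSpan ℝ (range (moment F μ)) ≤ LinearMap.ker ℓ := by
      rw [vectorSpan_def, Submodule.span_le]
      rintro _ ⟨_, ⟨ν, rfl⟩, _, ⟨ν', rfl⟩, rfl⟩
      simp [hℓ]
    have hne : vectorSpan ℝ (range (moment F μ)) ≠ ⊤ := fun h =>
      one_ne_zero ((hℓ μ).symm.trans (hspan (h ▸ Submodule.mem_top)))
    have := Submodule.finrank_lt hne
    simp only [finrank_prod, finrank_fintype_fun_eq_card, finrank_self] at this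
    omega
  · have : Subsingleton X := Fintype.card_le_one_iff_subsingleton.mp hcard
    rw [vectorSpan_of_subsingleton ℝ (subsingleton_range _)]
    simpa using hX

theorem convex_momentSet : Convex ℝ (momentSet F μ) :=
  (convex_convexHull ℝ _).inter ((convex_singleton _).prod convex_univ)

theorem continuous_moment (hF : Continuous F) : Continuous (moment F μ) :=
  continuous_subtype_val.prodMk (hF.prodMk (continuous_const.sub continuous_entH))

theorem integral_moment (hF : Continuous F) (P : ProbabilityMeasure (stdSimplex ℝ X)) :
    ∫ ν, moment F μ ν ∂(P : Measure (stdSimplex ℝ X)) =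
      (fun x => expct P fun ν => (ν : X → ℝ) x, expct P F, entH μ - expct P entH) := by
  have hint {W : stdSimplex ℝ X → ℝ} (hW : Continuous W) : Integrable W P :=
    hW.integrable_of_hasCompactSupport (.of_compactSpace W)
  have hcoord (x : X) : Continuous fun ν : stdSimplex ℝ X => (ν : X → ℝ) x :=
    (continuous_apply x).comp continuous_subtype_val
  have hcost : Integrable (fun ν => entH μ - entH ν) (P : Measure (stdSimplex ℝ X)) :=
    (integrable_const _).sub (hint continuous_entH)
  have hpost :
      Integrable (fun ν : stdSimplex ℝ X => (ν : X → ℝ)) (P : Measure (stdSimplex ℝ X)) :=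
    Integrable.of_eval fun x => hint (hcoord x)
  simp only [moment]
  rw [integral_pair hpost ((hint hF).prodMk hcost), integral_pair (hint hF) hcost,
    integral_sub (integrable_const _) (hint continuous_entH)]
  ext x
  · exact eval_integral (fun x => hint (hcoord x)) x
  all_goals simp [expct]

theorem isCompact_momentSet (hF : Continuous F) : IsCompact (momentSet F μ) :=
  (isCompact_convexHull_range (continuous_moment μ hF)).inter_right
    (isClosed_singleton.prod isClosed_univ)

theorem integral_moment_mem_momentSet (hF : Continuous F)
    {P : ProbabilityMeasure (stdSimplex ℝ X)} (hP : isBary P μ) :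
    ∫ ν, moment F μ ν ∂(P : Measure (stdSimplex ℝ X)) ∈ momentSet F μ :=
  ⟨integral_mem_convexHull_range (continuous_moment μ hF) _, by
    simpa [integral_moment μ hF, funext_iff, isBary] using hP⟩

theorem exists_finSupp_integral_moment_eq (hF : Continuous F) {b : (X → ℝ) × ℝ × ℝ}
    (hb : b ∈ momentSet F μ) :
    ∃ P : ProbabilityMeasure (stdSimplex ℝ X), isBary P μ ∧ finSupp P (2 * Fintype.card X) ∧
      ∫ ν, moment F μ ν ∂(P : Measure (stdSimplex ℝ X)) = b := by
  obtain ⟨w, hw, ν, rfl⟩ := exists_stdSimplex_sum_eq_of_mem_convexHull_range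
    (finrank_vectorSpan_range_moment_lt μ) hb.1
  have hP := integral_sumDirac ⟨w, hw⟩ ν (continuous_moment μ hF).stronglyMeasurable
  refine ⟨sumDirac ⟨w, hw⟩ ν, fun x => ?_, ⟨w, ν, hw.1, hw.2, rfl⟩, hP⟩
  have hbary := congrArg Prod.fst ((integral_moment μ hF _).symm.trans hP)
  exact congrFun (hbary.trans hb.2.1) x

end InformationAcquisition

theorem statement_17_general {X : Type*} [Fintype X]
    (F : stdSimplex ℝ X → ℝ) (hF : Continuous F)
    (f : ℝ → ℝ) (hf : Continuous f) (μ : stdSimplex ℝ X) :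
    ∃ Pstar : ProbabilityMeasure (stdSimplex ℝ X),
      isBary Pstar μ ∧ finSupp Pstar (2 * Fintype.card X) ∧
      (∀ Q : ProbabilityMeasure (stdSimplex ℝ X), isBary Q μ →
        expct Q F - f (entH μ - expct Q entH) ≤
          expct Pstar F - f (entH μ - expct Pstar entH)) ∧
      (Differentiable ℝ f →
        ∀ Q : ProbabilityMeasure (stdSimplex ℝ X), isBary Q μ →
          expct Q F - deriv f (entH μ - expct Pstar entH) * (entH μ - expct Q entH) ≤
          expct Pstar F - deriv f (entH μ - expct Pstar entH) * (entH μ - expct Pstar entH)) := by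
  set Φ : (X → ℝ) × ℝ × ℝ → ℝ := fun b => b.2.1 - f b.2.2
  have hΦ : Continuous Φ := by fun_prop
  obtain ⟨b, hb, hmax⟩ := (isCompact_momentSet μ hF).exists_isMaxOn
    ⟨moment F μ μ, subset_convexHull ℝ _ (mem_range_self μ), rfl, trivial⟩ hΦ.continuousOn
  obtain ⟨P, hPμ, hPsupp, rfl⟩ := exists_finSupp_integral_moment_eq μ hF hb
  refine ⟨P, hPμ, hPsupp, fun Q hQ => ?_, fun hdiff Q hQ => ?_⟩
  · simpa [Φ, integral_moment μ hF] using hmax (integral_moment_mem_momentSet μ hF hQ)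
  · have hsnd := hasFDerivAt_snd (𝕜 := ℝ)
      (p := ∫ ν, moment F μ ν ∂(P : Measure (stdSimplex ℝ X)))
    have hΦ' := hsnd.fst.sub ((hdiff _).hasDerivAt.comp_hasFDerivAt _ hsnd.snd)
    have := hmax.hasFDerivAt_apply_sub_nonpos (convex_momentSet μ) hΦ' hb
      (integral_moment_mem_momentSet μ hF hQ)
    simp only [integral_moment μ hF, Prod.mk_sub_mk, sub_apply,
      ContinuousLinearMap.comp_apply, ContinuousLinearMap.coe_snd', ContinuousLinearMap.coe_fst',
      smul_apply, smul_eq_mul] at this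
    linarith

/-- costly information acquisition. (i) The supremum of
`E_P[F] − f(E_P[H(μ) − H(ν)])` over `P ∈ Δ²(X)` with barycenter `μ` is attained by some
`P*` with support of size at most `2·|X|`; (ii) if `f` is differentiable then, with
`c* = E_{P*}[H(μ) − H(ν)]`, such a `P*` also maximizes
`E_P[F(ν)] − f'(c*)·E_P[H(μ) − H(ν)]` over all barycenter-`μ` measures. -/
theorem statement_17 {X : Type*} [Fintype X] [Nonempty X]
    (F : stdSimplex ℝ X → ℝ) (hF : Continuous F)
    (f : ℝ → ℝ) (hf : Continuous f) (μ : stdSimplex ℝ X) :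
    ∃ Pstar : ProbabilityMeasure (stdSimplex ℝ X),
      isBary Pstar μ ∧ finSupp Pstar (2 * Fintype.card X) ∧
      (∀ Q : ProbabilityMeasure (stdSimplex ℝ X), isBary Q μ →
        expct Q F - f (entH μ - expct Q entH) ≤
          expct Pstar F - f (entH μ - expct Pstar entH)) ∧
      (Differentiable ℝ f →
        ∀ Q : ProbabilityMeasure (stdSimplex ℝ X), isBary Q μ →
          expct Q F - deriv f (entH μ - expct Pstar entH) * (entH μ - expct Q entH) ≤
          expct Pstar F - deriv f (entH μ - expct Pstar entH) * (entH μ - expct Pstar entH)) :=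
  statement_17_general F hF f hf μ
end
end
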